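/- arXiv:2106.12322 — 4 statements merged into one kernel-verified Lean document; each statement's English description precedes it below -/
import Mathlib

section
/- Let v be a point of the plane, let r ∈ [0,1], and let R_θ be the Reuleaux triangle obtained as the intersection of three unit disks centered at the vertices of an equilateral triangle of side 1, positioned so that v is a vertex of the triangle, rotated by angle θ around v. For θ chosen uniformly at random in [0,2π), the probability that a fixed point u at distance r from v (0 < r ≤ 1) lies in R_θ equals (1/π)·arccos(r/2) − 1/6. -/
open Real MeasureTheory

/-- The Reuleaux triangle `R_θ` with a vertex at `v`, rotated by θ about `v`:
the intersection of the three closed unit disks centered at the vertices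
`v`, `v + e^{iθ}`, `v + e^{i(θ+π/3)}` of an equilateral triangle of side 1. -/
def Reuleaux (v : ℂ) (θ : ℝ) : Set ℂ :=
  {z : ℂ | dist z v ≤ 1 ∧ dist z (v + Complex.exp (θ * Complex.I)) ≤ 1 ∧
    dist z (v + Complex.exp ((θ + π/3) * Complex.I)) ≤ 1}

private lemma dist_circle_iff {r θ φ : ℝ} (hr : 0 < r) :
    ‖(r : ℂ) * Complex.exp (φ * Complex.I) - Complex.exp (θ * Complex.I)‖ ≤ 1 ↔
      r / 2 ≤ Real.cos (θ - φ) := by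
  set z := (r : ℂ) * Complex.exp (φ * Complex.I) - Complex.exp (θ * Complex.I) with hz
  have h1 : ‖z‖ ^ 2 = r ^ 2 + 1 - 2 * r * Real.cos (θ - φ) := by
    rw [Complex.sq_norm, hz, Complex.normSq_apply]
    simp only [Complex.sub_re, Complex.sub_im, Complex.mul_re, Complex.mul_im,
      Complex.ofReal_re, Complex.ofReal_im, Complex.exp_ofReal_mul_I_re,
      Complex.exp_ofReal_mul_I_im, Real.cos_sub]
    have h2 := Real.sin_sq_add_cos_sq φ
    have h3 := Real.sin_sq_add_cos_sq θ
    nlinarith [h2, h3]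
  have hnn : 0 ≤ ‖z‖ := norm_nonneg z
  constructor
  · intro h
    nlinarith
  · intro h
    nlinarith

/-- For θ uniform in [0, 2π), the probability that a fixed point `u` at
distance `r` from `v` (with 0 < r ≤ 1) lies in the Reuleaux triangle `R_θ`
equals (1/π)·arccos(r/2) − 1/6. -/
theorem reuleaux_coverage_probability (v u : ℂ) (r : ℝ)
    (hr0 : 0 < r) (hr1 : r ≤ 1) (hu : dist u v = r) :
    (volume {θ : ℝ | θ ∈ Set.Ico 0 (2*π) ∧ u ∈ Reuleaux v θ}).toReal / (2*π)
      = (1/π) * Real.arccos (r/2) - 1/6 := by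
  have hπ := Real.pi_pos
  set φ := Complex.arg (u - v) with hφ
  set α := Real.arccos (r/2) with hα
  have habs : ‖u - v‖ = r := by rw [← hu, Complex.dist_eq]
  have huv : (r : ℂ) * Complex.exp ((φ : ℂ) * Complex.I) = u - v := by
    rw [← habs]; exact Complex.norm_mul_exp_arg_mul_I (u - v)
  have hcosα : Real.cos α = r / 2 := Real.cos_arccos (by linarith) (by linarith)
  have hα0 : 0 ≤ α := Real.arccos_nonneg _
  have hα2 : α ≤ π / 2 := Real.arccos_le_pi_div_two.mpr (by linarith)
  have hα1 : π / 3 ≤ α := by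
    by_contra h
    push_neg at h
    have := Real.cos_lt_cos_of_nonneg_of_le_pi hα0 (by linarith) h
    rw [Real.cos_pi_div_three, hcosα] at this
    linarith
  have hmem : ∀ θ : ℝ, u ∈ Reuleaux v θ ↔
      (r / 2 ≤ Real.cos (θ - φ) ∧ r / 2 ≤ Real.cos (θ + π/3 - φ)) := by
    intro θ
    have hd0 : dist u v ≤ 1 := by rw [hu]; exact hr1
    have e1 : dist u (v + Complex.exp ((θ : ℂ) * Complex.I)) ≤ 1 ↔
        r / 2 ≤ Real.cos (θ - φ) := by
      rw [Complex.dist_eq, show u - (v + Complex.exp ((θ : ℂ) * Complex.I)) =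
        (r : ℂ) * Complex.exp ((φ : ℂ) * Complex.I) - Complex.exp ((θ : ℂ) * Complex.I) from by
          rw [huv]; ring]
      exact dist_circle_iff hr0
    have e2 : dist u (v + Complex.exp (((θ : ℂ) + (π : ℂ)/3) * Complex.I)) ≤ 1 ↔
        r / 2 ≤ Real.cos (θ + π/3 - φ) := by
      rw [show ((θ : ℂ) + (π : ℂ)/3) = ((θ + π/3 : ℝ) : ℂ) by push_cast; ring,
        Complex.dist_eq, show u - (v + Complex.exp ((↑(θ + π/3) : ℂ) * Complex.I)) =
        (r : ℂ) * Complex.exp ((φ : ℂ) * Complex.I) - Complex.exp ((↑(θ + π/3) : ℂ) * Complex.I)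
        from by rw [huv]; ring]
      exact dist_circle_iff hr0
    simp only [Reuleaux, Set.mem_setOf_eq, hd0, true_and]
    rw [e1, e2]
  set S : Set ℝ := {x : ℝ | r / 2 ≤ Real.cos (x - φ) ∧ r / 2 ≤ Real.cos (x + π/3 - φ)} with hS
  have hSmeas : MeasurableSet S := by
    have : S = {x : ℝ | r / 2 ≤ Real.cos (x - φ)} ∩ {x : ℝ | r / 2 ≤ Real.cos (x + π/3 - φ)} :=
      rfl
    rw [this]
    exact (measurableSet_le measurable_const (by fun_prop)).inter
      (measurableSet_le measurable_const (by fun_prop))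
  have hset : {θ : ℝ | θ ∈ Set.Ico 0 (2*π) ∧ u ∈ Reuleaux v θ} = S ∩ Set.Ico 0 (2*π) := by
    ext θ
    constructor
    · rintro ⟨h1, h2⟩
      exact ⟨(hmem θ).1 h2, h1⟩
    · rintro ⟨h1, h2⟩
      exact ⟨h2, (hmem θ).2 h1⟩
  have h2π : (0 : ℝ) < 2 * π := by linarith
  have step1 : volume (S ∩ Set.Ico 0 (2*π)) = volume (S ∩ Set.Ioc 0 (2*π)) :=
    measure_congr ((Filter.EventuallyEq.refl _ _).inter Ico_ae_eq_Ioc)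
  haveI : VAddInvariantMeasure (AddSubgroup.zmultiples (2*π)) ℝ volume :=
    ⟨fun c s _ => measure_preimage_add _ _ _⟩
  have hinv : ∀ g : AddSubgroup.zmultiples (2*π), (fun x : ℝ => g +ᵥ x) ⁻¹' S = S := by
    rintro ⟨g, hg⟩
    obtain ⟨n, rfl⟩ := AddSubgroup.mem_zmultiples_iff.mp hg
    ext x
    have e1 : Real.cos ((n • (2*π) : ℝ) + x - φ) = Real.cos (x - φ) := by
      rw [show ((n • (2*π) : ℝ)) + x - φ = (x - φ) + (n : ℝ) * (2*π) by
        rw [zsmul_eq_mul]; ring, Real.cos_add_int_mul_two_pi]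
    have e2 : Real.cos ((n • (2*π) : ℝ) + x + π/3 - φ) = Real.cos (x + π/3 - φ) := by
      rw [show ((n • (2*π) : ℝ)) + x + π/3 - φ = (x + π/3 - φ) + (n : ℝ) * (2*π) by
        rw [zsmul_eq_mul]; ring, Real.cos_add_int_mul_two_pi]
    simp only [Set.mem_preimage, hS, Set.mem_setOf_eq]
    show r / 2 ≤ Real.cos ((n • (2*π) : ℝ) + x - φ) ∧
        r / 2 ≤ Real.cos ((n • (2*π) : ℝ) + x + π/3 - φ) ↔ _
    rw [e1, e2]
  have step2 : volume (S ∩ Set.Ioc 0 (0 + 2*π)) =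
      volume (S ∩ Set.Ioc (φ + α - π/3) ((φ + α - π/3) + 2*π)) :=
    (isAddFundamentalDomain_Ioc h2π 0).measure_set_eq
      (isAddFundamentalDomain_Ioc h2π _) hSmeas hinv
  have hIcc : S ∩ Set.Ioc (φ + α - π/3) ((φ + α - π/3) + 2*π)
      = Set.Icc (φ + 2*π - α) (φ + 2*π + α - π/3) := by
    ext x
    simp only [Set.mem_inter_iff, hS, Set.mem_setOf_eq, Set.mem_Ioc, Set.mem_Icc]
    constructor
    · rintro ⟨⟨h1, h2⟩, hx1, hx2⟩
      refine ⟨?_, by linarith⟩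
      by_contra hcon
      push_neg at hcon
      rcases le_or_gt (x - φ) α with hc | hc
      · have hlt : Real.cos (x + π/3 - φ) < Real.cos α :=
          Real.cos_lt_cos_of_nonneg_of_le_pi hα0 (by linarith) (by linarith)
        rw [hcosα] at hlt
        linarith
      · rcases le_or_gt (x - φ) π with hc2 | hc2
        · have hlt : Real.cos (x - φ) < Real.cos α :=
            Real.cos_lt_cos_of_nonneg_of_le_pi hα0 hc2 hc
          rw [hcosα] at hlt
          linarith
        · have hlt : Real.cos (2*π - (x - φ)) < Real.cos α :=
            Real.cos_lt_cos_of_nonneg_of_le_pi hα0 (by linarith) (by linarith)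
          rw [Real.cos_two_pi_sub, hcosα] at hlt
          linarith
    · rintro ⟨hx1, hx2⟩
      have m1 : r / 2 ≤ Real.cos (x - φ) := by
        have habs1 : |x - φ - 2*π| ≤ α := by
          rw [abs_le]; constructor <;> linarith
        calc r / 2 = Real.cos α := hcosα.symm
          _ ≤ Real.cos |x - φ - 2*π| :=
            Real.cos_le_cos_of_nonneg_of_le_pi (abs_nonneg _) (by linarith) habs1
          _ = Real.cos (x - φ - 2*π) := Real.cos_abs _
          _ = Real.cos (x - φ) := Real.cos_sub_two_pi _
      have m2 : r / 2 ≤ Real.cos (x + π/3 - φ) := by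
        have habs2 : |x + π/3 - φ - 2*π| ≤ α := by
          rw [abs_le]; constructor <;> linarith
        calc r / 2 = Real.cos α := hcosα.symm
          _ ≤ Real.cos |x + π/3 - φ - 2*π| :=
            Real.cos_le_cos_of_nonneg_of_le_pi (abs_nonneg _) (by linarith) habs2
          _ = Real.cos (x + π/3 - φ - 2*π) := Real.cos_abs _
          _ = Real.cos (x + π/3 - φ) := Real.cos_sub_two_pi _
      exact ⟨⟨m1, m2⟩, by linarith, by linarith⟩
  have key : volume {θ : ℝ | θ ∈ Set.Ico 0 (2*π) ∧ u ∈ Reuleaux v θ}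
      = ENNReal.ofReal (2*α - π/3) := by
    rw [hset, step1, show Set.Ioc (0:ℝ) (2*π) = Set.Ioc (0:ℝ) (0 + 2*π) by rw [zero_add],
      step2, hIcc, Real.volume_Icc]
    congr 1
    ring
  rw [key, ENNReal.toReal_ofReal (by linarith)]
  field_simp
  ring
end

section
/- Let G be a unit-disk graph embedded in the plane with clique number ω, let v be a vertex, and for r ∈ [0,1] let x_r(v) denote the number of neighbors of v at Euclidean distance exactly r from v. Then the (finite) sum over all r ∈ [0,1] of (2 − r)·x_r(v) is at most 6ω. -/
open Real

lemma aux_le_one {D t : ℝ} (hD : D ≤ t) (hCS : t^2 ≤ D) : D ≤ 1 := by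
  nlinarith [sq_nonneg (t - 1)]

lemma vertex_case (p1 p2 q1 q2 W1 W2 X1 X2 Y1 Y2 a b : ℝ)
    (hWX : (W1-X1)^2 + (W2-X2)^2 = 1)
    (hWY : (W1-Y1)^2 + (W2-Y2)^2 = 1)
    (hqX : (q1-X1)^2 + (q2-X2)^2 ≤ 1)
    (hqY : (q1-Y1)^2 + (q2-Y2)^2 ≤ 1)
    (hpW : (p1-W1)^2 + (p2-W2)^2 ≤ 1)
    (ha : 0 ≤ a) (hb : 0 ≤ b)
    (hw1 : q1 - p1 = a*(W1-X1) + b*(W1-Y1))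
    (hw2 : q2 - p2 = a*(W2-X2) + b*(W2-Y2)) :
    (q1-p1)^2 + (q2-p2)^2 ≤ 1 := by
  have hX : (q1-W1)*(W1-X1) + (q2-W2)*(W2-X2) ≤ 0 := by
    nlinarith [sq_nonneg (q1-W1), sq_nonneg (q2-W2)]
  have hY : (q1-W1)*(W1-Y1) + (q2-W2)*(W2-Y2) ≤ 0 := by
    nlinarith [sq_nonneg (q1-W1), sq_nonneg (q2-W2)]
  have hid : (q1-p1)^2 + (q2-p2)^2 - ((W1-p1)*(q1-p1) + (W2-p2)*(q2-p2))
      = a*((q1-W1)*(W1-X1) + (q2-W2)*(W2-X2))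
        + b*((q1-W1)*(W1-Y1) + (q2-W2)*(W2-Y2)) := by
    linear_combination (q1-W1)*hw1 + (q2-W2)*hw2
  have hD : (q1-p1)^2 + (q2-p2)^2 ≤ (W1-p1)*(q1-p1) + (W2-p2)*(q2-p2) := by
    have h1 : a*((q1-W1)*(W1-X1) + (q2-W2)*(W2-X2)) ≤ 0 :=
      mul_nonpos_of_nonneg_of_nonpos ha hX
    have h2 : b*((q1-W1)*(W1-Y1) + (q2-W2)*(W2-Y2)) ≤ 0 :=
      mul_nonpos_of_nonneg_of_nonpos hb hY
    linarith [hid]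
  have lag : ((W1-p1)*(q1-p1) + (W2-p2)*(q2-p2))^2
      + ((W1-p1)*(q2-p2) - (W2-p2)*(q1-p1))^2
      = ((p1-W1)^2 + (p2-W2)^2) * ((q1-p1)^2 + (q2-p2)^2) := by ring
  have hDpos : (0:ℝ) ≤ (q1-p1)^2 + (q2-p2)^2 := by positivity
  have hCS : ((W1-p1)*(q1-p1) + (W2-p2)*(q2-p2))^2 ≤ (q1-p1)^2 + (q2-p2)^2 := by
    have h3 := mul_le_mul_of_nonneg_right hpW hDpos
    have h4 := sq_nonneg ((W1-p1)*(q2-p2) - (W2-p2)*(q1-p1))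
    linarith [lag, h3, h4]
  exact aux_le_one hD hCS

lemma reuleaux_coord (s p1 p2 q1 q2 : ℝ) (hs : s^2 = 3) (hs0 : 0 < s)
    (hpA : (p1-0)^2+(p2-0)^2 ≤ 1) (hpB : (p1-1)^2+(p2-0)^2 ≤ 1)
    (hpC : (p1-1/2)^2+(p2-s/2)^2 ≤ 1)
    (hqA : (q1-0)^2+(q2-0)^2 ≤ 1) (hqB : (q1-1)^2+(q2-0)^2 ≤ 1)
    (hqC : (q1-1/2)^2+(q2-s/2)^2 ≤ 1) :
    (q1-p1)^2+(q2-p2)^2 ≤ 1 := by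
  have eAB : ((0:ℝ)-1)^2 + ((0:ℝ)-0)^2 = 1 := by ring
  have eAC : ((0:ℝ)-1/2)^2 + ((0:ℝ)-s/2)^2 = 1 := by linear_combination hs/4
  have eCA : ((1/2:ℝ)-0)^2 + (s/2-0)^2 = 1 := by linear_combination hs/4
  have eCB : ((1/2:ℝ)-1)^2 + (s/2-0)^2 = 1 := by linear_combination hs/4
  have eBA : ((1:ℝ)-0)^2 + ((0:ℝ)-0)^2 = 1 := by ring
  have eBC : ((1:ℝ)-1/2)^2 + ((0:ℝ)-s/2)^2 = 1 := by linear_combination hs/4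
  have key : ∀ x1 x2 y1 y2 : ℝ,
      (x1-0)^2+(x2-0)^2 ≤ 1 → (x1-1)^2+(x2-0)^2 ≤ 1 → (x1-1/2)^2+(x2-s/2)^2 ≤ 1 →
      (y1-0)^2+(y2-0)^2 ≤ 1 → (y1-1)^2+(y2-0)^2 ≤ 1 → (y1-1/2)^2+(y2-s/2)^2 ≤ 1 →
      0 ≤ y2 - x2 → (y1-x1)^2+(y2-x2)^2 ≤ 1 := by
    intro x1 x2 y1 y2 hxA hxB hxC hyA hyB hyC h2
    have hb0 : 0 ≤ 2*s*(y2-x2)/3 := by positivity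
    rcases le_total (s*(y2-x2)) (3*(y1-x1)) with hA' | h1
    · -- vertex A, roles q:=x, p:=y
      have ha0 : 0 ≤ (3*(y1-x1) - s*(y2-x2))/3 := by linarith
      have h := vertex_case y1 y2 x1 x2 0 0 1 0 (1/2) (s/2)
        ((3*(y1-x1) - s*(y2-x2))/3) (2*s*(y2-x2)/3)
        eAB eAC hxB hxC hyA ha0 hb0
        (by ring) (by linear_combination ((y2-x2)/3) * hs)
      have flip : (y1-x1)^2+(y2-x2)^2 = (x1-y1)^2+(x2-y2)^2 := by ring
      linarith [h]
    · rcases le_total (-(s*(y2-x2))) (3*(y1-x1)) with h2' | hB'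
      · -- vertex C, roles q:=y, p:=x
        have ha0 : 0 ≤ (3*(y1-x1) + s*(y2-x2))/3 := by linarith
        have hb0' : 0 ≤ (s*(y2-x2) - 3*(y1-x1))/3 := by linarith
        have h := vertex_case x1 x2 y1 y2 (1/2) (s/2) 0 0 1 0
          ((3*(y1-x1) + s*(y2-x2))/3) ((s*(y2-x2) - 3*(y1-x1))/3)
          eCA eCB hyA hyB hxC ha0 hb0'
          (by ring) (by linear_combination (-(y2-x2)/3) * hs)
        exact h
      · -- vertex B, roles q:=x, p:=y
        have ha0 : 0 ≤ (-3*(y1-x1) - s*(y2-x2))/3 := by linarith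
        have h := vertex_case y1 y2 x1 x2 1 0 0 0 (1/2) (s/2)
          ((-3*(y1-x1) - s*(y2-x2))/3) (2*s*(y2-x2)/3)
          eBA eBC hxA hxC hyB ha0 hb0
          (by ring) (by linear_combination ((y2-x2)/3) * hs)
        have flip : (y1-x1)^2+(y2-x2)^2 = (x1-y1)^2+(x2-y2)^2 := by ring
        linarith [h]
  rcases le_total p2 q2 with h | h
  · exact key p1 p2 q1 q2 hpA hpB hpC hqA hqB hqC (by linarith)
  · have := key q1 q2 p1 p2 hqA hqB hqC hpA hpB hpC (by linarith)
    have flip : (q1-p1)^2+(q2-p2)^2 = (p1-q1)^2+(p2-q2)^2 := by ring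
    linarith [this]

lemma abs_le_one_of_sq {w : ℂ} (h : w.re^2 + w.im^2 ≤ 1) : ‖w‖ ≤ 1 := by
  nlinarith [Complex.sq_norm w, Complex.normSq_apply w, norm_nonneg w]

lemma sq_le_one_of_abs {w : ℂ} (h : ‖w‖ ≤ 1) : w.re^2 + w.im^2 ≤ 1 := by
  nlinarith [Complex.sq_norm w, Complex.normSq_apply w, norm_nonneg w]

lemma reuleaux_complex (v p q : ℂ) (θ : ℝ)
    (hp0 : dist p v ≤ 1) (hp1 : dist p (v + Complex.exp (θ * Complex.I)) ≤ 1)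
    (hp2 : dist p (v + Complex.exp ((θ + π/3) * Complex.I)) ≤ 1)
    (hq0 : dist q v ≤ 1) (hq1 : dist q (v + Complex.exp (θ * Complex.I)) ≤ 1)
    (hq2 : dist q (v + Complex.exp ((θ + π/3) * Complex.I)) ≤ 1) :
    dist p q ≤ 1 := by
  have hmul : Complex.exp (θ * Complex.I) * Complex.exp (-θ * Complex.I) = 1 := by
    rw [← Complex.exp_add]; norm_num
  have hz : Complex.exp (((θ + π/3 : ℝ) : ℂ) * Complex.I) * Complex.exp (-θ * Complex.I)
      = Complex.exp (((π/3 : ℝ) : ℂ) * Complex.I) := by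
    rw [← Complex.exp_add]; congr 1; push_cast; ring
  have habs : ∀ w : ℂ, ‖w * Complex.exp (-θ * Complex.I)‖ = ‖w‖ := by
    intro w
    rw [norm_mul, show (-(θ:ℂ)) * Complex.I = ((-θ : ℝ) : ℂ) * Complex.I by push_cast; ring,
      Complex.norm_exp_ofReal_mul_I, mul_one]
  have hzre : (Complex.exp (((π/3 : ℝ) : ℂ) * Complex.I)).re = 1/2 := by
    rw [Complex.exp_ofReal_mul_I_re, Real.cos_pi_div_three]
  have hzim : (Complex.exp (((π/3 : ℝ) : ℂ) * Complex.I)).im = Real.sqrt 3 / 2 := by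
    rw [Complex.exp_ofReal_mul_I_im, Real.sin_pi_div_three]
  rw [show ((θ:ℂ) + ↑π/3) * Complex.I = ((θ + π/3 : ℝ) : ℂ) * Complex.I
    by push_cast; ring] at hp2 hq2
  -- six squared facts
  have sqf : ∀ x : ℂ, dist x v ≤ 1 → dist x (v + Complex.exp (θ * Complex.I)) ≤ 1 →
      dist x (v + Complex.exp (((θ + π/3 : ℝ) : ℂ) * Complex.I)) ≤ 1 →
      (((x - v) * Complex.exp (-θ * Complex.I)).re - 0)^2
        + (((x - v) * Complex.exp (-θ * Complex.I)).im - 0)^2 ≤ 1 ∧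
      (((x - v) * Complex.exp (-θ * Complex.I)).re - 1)^2
        + (((x - v) * Complex.exp (-θ * Complex.I)).im - 0)^2 ≤ 1 ∧
      (((x - v) * Complex.exp (-θ * Complex.I)).re - 1/2)^2
        + (((x - v) * Complex.exp (-θ * Complex.I)).im - Real.sqrt 3 / 2)^2 ≤ 1 := by
    intro x h0 h1 h2
    set X := (x - v) * Complex.exp (-θ * Complex.I) with hX
    refine ⟨?_, ?_, ?_⟩
    · have : ‖X‖ ≤ 1 := by rw [hX, habs, ← Complex.dist_eq]; exact h0
      have := sq_le_one_of_abs this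
      simpa using this
    · have e1 : X - 1 = (x - (v + Complex.exp (θ * Complex.I))) * Complex.exp (-θ * Complex.I) := by
        rw [hX]; linear_combination hmul
      have : ‖X - 1‖ ≤ 1 := by rw [e1, habs, ← Complex.dist_eq]; exact h1
      have := sq_le_one_of_abs this
      simpa [Complex.sub_re, Complex.sub_im] using this
    · have e2 : X - Complex.exp (((π/3 : ℝ) : ℂ) * Complex.I)
          = (x - (v + Complex.exp (((θ + π/3 : ℝ) : ℂ) * Complex.I))) * Complex.exp (-θ * Complex.I) := by
        rw [hX]; linear_combination hz
      have : ‖X - Complex.exp (((π/3 : ℝ) : ℂ) * Complex.I)‖ ≤ 1 := by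
        rw [e2, habs, ← Complex.dist_eq]; exact h2
      have h3 := sq_le_one_of_abs this
      rw [Complex.sub_re, Complex.sub_im, hzre, hzim] at h3
      exact h3
  obtain ⟨hpa, hpb, hpc⟩ := sqf p hp0 hp1 hp2
  obtain ⟨hqa, hqb, hqc⟩ := sqf q hq0 hq1 hq2
  have hs : (Real.sqrt 3)^2 = 3 := Real.sq_sqrt (by norm_num)
  have hs0 : (0:ℝ) < Real.sqrt 3 := Real.sqrt_pos.2 (by norm_num)
  have main := reuleaux_coord (Real.sqrt 3) _ _ _ _ hs hs0 hpa hpb hpc hqa hqb hqc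
  have ediff : (q - v) * Complex.exp (-θ * Complex.I) - (p - v) * Complex.exp (-θ * Complex.I)
      = (q - p) * Complex.exp (-θ * Complex.I) := by ring
  have : ‖(q - p) * Complex.exp (-θ * Complex.I)‖ ≤ 1 := by
    apply abs_le_one_of_sq
    rw [← ediff, Complex.sub_re, Complex.sub_im]
    exact main
  rw [habs] at this
  rw [dist_comm, Complex.dist_eq]
  exact this

def inT (v : ℂ) (θ : ℝ) (u : ℂ) : Prop :=
  dist u v ≤ 1 ∧ dist u (v + Complex.exp (θ * Complex.I)) ≤ 1 ∧
    dist u (v + Complex.exp ((θ + π/3) * Complex.I)) ≤ 1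

lemma dist_sq_eq (r α θ : ℝ) :
    (dist ((r:ℂ) * Complex.exp ((α:ℂ) * Complex.I)) (Complex.exp ((θ:ℂ) * Complex.I)))^2
      = r^2 + 1 - 2*r*Real.cos (α - θ) := by
  rw [Complex.dist_eq, Complex.sq_norm, Complex.normSq_apply, Real.cos_sub]
  simp only [Complex.sub_re, Complex.sub_im, Complex.mul_re, Complex.mul_im,
    Complex.exp_ofReal_mul_I_re, Complex.exp_ofReal_mul_I_im, Complex.ofReal_re,
    Complex.ofReal_im]
  linear_combination (r^2) * (Real.sin_sq_add_cos_sq α) + Real.sin_sq_add_cos_sq θ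

lemma exp_shift (φ : ℝ) (k : ℤ) :
    Complex.exp (((φ + 2*π*(k:ℝ) : ℝ):ℂ) * Complex.I) = Complex.exp ((φ:ℂ) * Complex.I) := by
  rw [show ((φ + 2*π*(k:ℝ) : ℝ):ℂ) * Complex.I
      = (φ:ℂ)*Complex.I + (k:ℂ)*(2*(π:ℂ)*Complex.I) by push_cast; ring,
    Complex.exp_add, Complex.exp_int_mul_two_pi_mul_I, mul_one]

lemma inT_shift (v u : ℂ) (θ : ℝ) (k : ℤ) : inT v (θ + 2*π*(k:ℝ)) u ↔ inT v θ u := by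
  unfold inT
  rw [show ((↑(θ + 2*π*(k:ℝ)) : ℂ)) * Complex.I = ((θ + 2*π*(k:ℝ) : ℝ):ℂ) * Complex.I from rfl,
    exp_shift θ k,
    show ((↑(θ + 2*π*(k:ℝ)) : ℂ) + ↑π/3) * Complex.I
      = ((θ + π/3 + 2*π*(k:ℝ) : ℝ) : ℂ) * Complex.I by push_cast; ring,
    exp_shift (θ + π/3) k,
    show ((θ + π/3 : ℝ) : ℂ) * Complex.I = ((θ:ℂ) + ↑π/3) * Complex.I by push_cast; ring]

lemma dist_translate (u v w : ℂ) : dist u (v + w) = dist (u - v) w := by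
  rw [Complex.dist_eq, Complex.dist_eq]; congr 1; ring

lemma mem_inT (v u : ℂ) (θ : ℝ) (hr : dist u v ≤ 1)
    (h1 : dist u v / 2 ≤ Real.cos (Complex.arg (u - v) - θ))
    (h2 : dist u v / 2 ≤ Real.cos (Complex.arg (u - v) - (θ + π/3))) : inT v θ u := by
  have hr0 : 0 ≤ dist u v := dist_nonneg
  have hrepr : ((dist u v : ℝ):ℂ) * Complex.exp ((Complex.arg (u-v) : ℂ) * Complex.I) = u - v := by
    rw [Complex.dist_eq]; exact Complex.norm_mul_exp_arg_mul_I (u - v)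
  have key : ∀ φ : ℝ, dist u v / 2 ≤ Real.cos (Complex.arg (u - v) - φ) →
      dist u (v + Complex.exp ((φ:ℝ) * Complex.I)) ≤ 1 := by
    intro φ hφ
    rw [dist_translate, ← hrepr]
    have hsq := dist_sq_eq (dist u v) (Complex.arg (u-v)) φ
    have h2r : 2 * dist u v * (dist u v / 2) ≤ 2 * dist u v * Real.cos (Complex.arg (u-v) - φ) :=
      mul_le_mul_of_nonneg_left hφ (by linarith)
    nlinarith [dist_nonneg (x := ((dist u v : ℝ):ℂ) * Complex.exp ((Complex.arg (u-v) : ℂ) * Complex.I)) (y := Complex.exp ((φ:ℂ) * Complex.I))]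
  refine ⟨hr, key θ h1, ?_⟩
  have := key (θ + π/3) h2
  rwa [show ((θ + π/3 : ℝ):ℂ) * Complex.I = ((θ:ℂ) + ↑π/3) * Complex.I by push_cast; ring] at this



open scoped Classical in
lemma count_lower (M : ℕ) (hM : 0 < M) (u v : ℂ) (hr : dist u v ≤ 1) :
    (M:ℝ) * (2 - dist u v) / 6 - 1
      ≤ (((Finset.range M).filter (fun j : ℕ => inT v (2*π*(j:ℝ)/(M:ℝ)) u)).card : ℝ) := by
  have hπ : (0:ℝ) < π := Real.pi_pos
  have htwoπ : (0:ℝ) < 2*π := by linarith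
  have hM' : (0:ℝ) < (M:ℝ) := by exact_mod_cast hM
  have hr0 : 0 ≤ dist u v := dist_nonneg
  obtain ⟨r, hrdef⟩ : ∃ r, dist u v = r := ⟨_, rfl⟩
  rw [hrdef] at hr hr0 ⊢
  obtain ⟨α, hαdef⟩ : ∃ α, Complex.arg (u - v) = α := ⟨_, rfl⟩
  have hπr : π * r ≤ π := by nlinarith
  have hπr0 : 0 ≤ π * r := mul_nonneg hπ.le hr0
  have harcsin : Real.arcsin (r/2) ≤ π*r/6 := by
    rw [Real.arcsin_le_iff_le_sin ⟨by linarith, by linarith⟩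
      ⟨by linarith, by linarith⟩]
    have hconc := strictConcaveOn_sin_Icc.concaveOn.2 (x := 0) (y := π/6)
      (Set.mem_Icc.2 ⟨le_refl (0:ℝ), hπ.le⟩)
      (Set.mem_Icc.2 ⟨by positivity, by linarith⟩)
      (by linarith : (0:ℝ) ≤ 1 - r) hr0 (by ring)
    have e1 : (1-r) • Real.sin 0 + r • Real.sin (π/6) = r/2 := by
      rw [Real.sin_zero, Real.sin_pi_div_six]; simp only [smul_eq_mul]; ring
    have e2 : (1-r) • (0:ℝ) + r • (π/6) = π*r/6 := by simp only [smul_eq_mul]; ring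
    rw [e1, e2] at hconc
    exact hconc
  obtain ⟨c, hcosc, hcle, hclow⟩ : ∃ c : ℝ, Real.cos c = r/2 ∧ c ≤ π/2 ∧ π/2 - π*r/6 ≤ c := by
    refine ⟨Real.arccos (r/2), Real.cos_arccos (by linarith) (by linarith),
      Real.arccos_le_pi_div_two.2 (by linarith), ?_⟩
    rw [Real.arccos_eq_pi_div_two_sub_arcsin]; linarith
  have hc0 : 0 ≤ c := by linarith
  have hmem : ∀ φ : ℝ, α - c ≤ φ → φ ≤ α + c - π/3 → inT v φ u := by
    intro φ h1 h2
    refine mem_inT v u φ (by rw [hrdef]; exact hr) ?_ ?_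
    · rw [hrdef, hαdef]
      have habs : |α - φ| ≤ c := abs_le.2 ⟨by linarith, by linarith⟩
      calc r/2 = Real.cos c := hcosc.symm
      _ ≤ Real.cos |α - φ| := Real.cos_le_cos_of_nonneg_of_le_pi (abs_nonneg _) (by linarith) habs
      _ = Real.cos (α - φ) := Real.cos_abs _
    · rw [hrdef, hαdef]
      have habs : |α - (φ + π/3)| ≤ c := abs_le.2 ⟨by linarith, by linarith⟩
      calc r/2 = Real.cos c := hcosc.symm
      _ ≤ Real.cos |α - (φ + π/3)| :=
          Real.cos_le_cos_of_nonneg_of_le_pi (abs_nonneg _) (by linarith) habs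
      _ = Real.cos (α - (φ + π/3)) := Real.cos_abs _
  obtain ⟨n1, hn1le, hn1lt⟩ : ∃ n1 : ℤ, (M:ℝ)*(α-c)/(2*π) ≤ (n1:ℝ) ∧
      (n1:ℝ) < (M:ℝ)*(α-c)/(2*π) + 1 :=
    ⟨⌈(M:ℝ)*(α-c)/(2*π)⌉, Int.le_ceil _, Int.ceil_lt_add_one _⟩
  obtain ⟨n2, hn2le, hn2gt⟩ : ∃ n2 : ℤ, (n2:ℝ) ≤ (M:ℝ)*(α+c-π/3)/(2*π) ∧
      (M:ℝ)*(α+c-π/3)/(2*π) - 1 < (n2:ℝ) :=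
    ⟨⌊(M:ℝ)*(α+c-π/3)/(2*π)⌋, Int.floor_le _, Int.sub_one_lt_floor _⟩
  have hn21 : ((n2 - n1 : ℤ):ℝ) < (M:ℝ) := by
    have hle : (M:ℝ)*(2*c-π/3) ≤ (M:ℝ)*(2*(π/2)-π/3) :=
      mul_le_mul_of_nonneg_left (by linarith) hM'.le
    have hle2 : (M:ℝ)*(2*c-π/3)/(2*π) ≤ (M:ℝ)*(2*(π/2)-π/3)/(2*π) := by gcongr
    have heq : (M:ℝ)*(2*(π/2)-π/3)/(2*π) = (M:ℝ)/3 := by field_simp; ring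
    have hdiff : (M:ℝ)*(α+c-π/3)/(2*π) - (M:ℝ)*(α-c)/(2*π) = (M:ℝ)*(2*c-π/3)/(2*π) := by
      ring
    push_cast
    linarith
  have hn21' : n2 - n1 < (M:ℤ) := by exact_mod_cast hn21
  have hMz : (0:ℤ) < (M:ℤ) := by exact_mod_cast hM
  have hmaps : ∀ n ∈ Finset.Icc n1 n2, ((n % (M:ℤ)).toNat) ∈
      (Finset.range M).filter (fun j : ℕ => inT v (2*π*(j:ℝ)/(M:ℝ)) u) := by
    intro n hn
    rw [Finset.mem_Icc] at hn
    have hmod0 : 0 ≤ n % (M:ℤ) := Int.emod_nonneg n (ne_of_gt hMz)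
    have hmodM : n % (M:ℤ) < (M:ℤ) := Int.emod_lt_of_pos n hMz
    rw [Finset.mem_filter, Finset.mem_range]
    constructor
    · omega
    · have hcast : (((n % (M:ℤ)).toNat : ℕ) : ℝ) = (n:ℝ) - (M:ℝ)*((n / (M:ℤ) : ℤ):ℝ) := by
        rw [show (((n % (M:ℤ)).toNat : ℕ) : ℝ) = (((n % (M:ℤ)).toNat : ℤ) : ℝ) by push_cast; ring,
          Int.toNat_of_nonneg hmod0, Int.emod_def]
        push_cast; ring
      have hθ : 2*π*(((n % (M:ℤ)).toNat : ℕ):ℝ)/(M:ℝ)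
          = 2*π*(n:ℝ)/(M:ℝ) + 2*π*(((-(n / (M:ℤ)) : ℤ)):ℝ) := by
        rw [hcast]; push_cast; field_simp; ring
      rw [hθ, inT_shift]
      apply hmem
      · have h3 : (M:ℝ)*(α-c)/(2*π) ≤ (n:ℝ) := le_trans hn1le (by exact_mod_cast hn.1)
        rw [div_le_iff₀ htwoπ] at h3
        rw [show 2*π*(n:ℝ)/(M:ℝ) = (2*π*(n:ℝ))/(M:ℝ) by ring, le_div_iff₀ hM']
        linarith
      · have h3 : (n:ℝ) ≤ (M:ℝ)*(α+c-π/3)/(2*π) := le_trans (by exact_mod_cast hn.2) hn2le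
        rw [le_div_iff₀ htwoπ] at h3
        rw [show 2*π*(n:ℝ)/(M:ℝ) = (2*π*(n:ℝ))/(M:ℝ) by ring, div_le_iff₀ hM']
        linarith
  have hinj : Set.InjOn (fun n : ℤ => (n % (M:ℤ)).toNat) (Finset.Icc n1 n2) := by
    intro x hx y hy heq
    simp only [Finset.coe_Icc, Set.mem_Icc] at hx hy
    have hx0 : 0 ≤ x % (M:ℤ) := Int.emod_nonneg x (ne_of_gt hMz)
    have hy0 : 0 ≤ y % (M:ℤ) := Int.emod_nonneg y (ne_of_gt hMz)
    have e1 : x % (M:ℤ) = y % (M:ℤ) := by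
      have t1 := Int.toNat_of_nonneg hx0
      have t2 := Int.toNat_of_nonneg hy0
      simp only at heq
      omega
    have hdvd : (M:ℤ) ∣ x - y := by
      rw [Int.emod_eq_emod_iff_emod_sub_eq_zero] at e1
      exact Int.dvd_of_emod_eq_zero e1
    obtain ⟨k, hk⟩ := hdvd
    have hup : x - y < (M:ℤ) := by omega
    have hdown : -(M:ℤ) < x - y := by omega
    have hk0 : k = 0 := by
      rcases lt_trichotomy k 0 with h | h | h
      · exfalso
        have h7 : (M:ℤ)*k ≤ (M:ℤ)*(-1) := mul_le_mul_of_nonneg_left (by omega) (by omega)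
        linarith
      · exact h
      · exfalso
        have h7 : (M:ℤ)*1 ≤ (M:ℤ)*k := mul_le_mul_of_nonneg_left (by omega) (by omega)
        linarith
    rw [hk0, mul_zero] at hk
    omega
  have hcards := Finset.card_le_card_of_injOn (fun n : ℤ => (n % (M:ℤ)).toNat) hmaps hinj
  have hicc : (Finset.Icc n1 n2).card = (n2 + 1 - n1).toNat := Int.card_Icc n1 n2
  have hc1 : ((Finset.Icc n1 n2).card : ℝ)
      ≤ ((((Finset.range M).filter (fun j : ℕ => inT v (2*π*(j:ℝ)/(M:ℝ)) u)).card : ℕ) : ℝ) := by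
    exact_mod_cast hcards
  have hc2 : ((n2 + 1 - n1 : ℤ) : ℝ) ≤ ((Finset.Icc n1 n2).card : ℝ) := by
    rw [hicc]
    exact_mod_cast Int.self_le_toNat _
  have h9 : (M:ℝ)*(2-r)/6 - 1 ≤ ((n2:ℝ) + 1 - (n1:ℝ)) := by
    have e1 : (M:ℝ)*(π*(2-r)/3)/(2*π) = (M:ℝ)*(2-r)/6 := by field_simp; ring
    have e2 : (M:ℝ)*(π*(2-r)/3) ≤ (M:ℝ)*((α+c-π/3) - (α-c)) :=
      mul_le_mul_of_nonneg_left (by linarith) hM'.le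
    have e3 : (M:ℝ)*(π*(2-r)/3)/(2*π) ≤ (M:ℝ)*((α+c-π/3) - (α-c))/(2*π) := by gcongr
    have e4 : (M:ℝ)*((α+c-π/3) - (α-c))/(2*π)
        = (M:ℝ)*(α+c-π/3)/(2*π) - (M:ℝ)*(α-c)/(2*π) := by ring
    linarith
  have h10 : ((n2 + 1 - n1 : ℤ) : ℝ) = (n2:ℝ) + 1 - (n1:ℝ) := by push_cast; ring
  linarith
open scoped Classical in
lemma clique_bound (V : Finset ℂ) (ω : ℕ)
    (hω : IsGreatest {n : ℕ | ∃ S : Finset ℂ, S ⊆ V ∧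
      (S : Set ℂ).Pairwise (fun u w => dist u w ≤ 1) ∧ S.card = n} ω)
    (v : ℂ) (θ : ℝ) :
    (V.filter (fun u => inT v θ u)).card ≤ ω := by
  apply hω.2
  refine ⟨V.filter (fun u => inT v θ u), Finset.filter_subset _ _, ?_, rfl⟩
  intro p hp q hq hne
  rw [Finset.mem_coe, Finset.mem_filter] at hp hq
  obtain ⟨p0, p1, p2⟩ := hp.2
  obtain ⟨q0, q1, q2⟩ := hq.2
  exact reuleaux_complex v p q θ p0 p1 p2 q0 q1 q2

/-- `IsCliqueNum V ω` : ω is the clique number of the unit-disk graph on the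
finite point set `V ⊆ ℂ` (cliques are exactly sets of points of pairwise
Euclidean distance at most 1). -/
def IsCliqueNum (V : Finset ℂ) (ω : ℕ) : Prop :=
  IsGreatest {n : ℕ | ∃ S : Finset ℂ, S ⊆ V ∧
    (S : Set ℂ).Pairwise (fun u w => dist u w ≤ 1) ∧ S.card = n} ω

/-- Σ_{r ∈ [0,1]} (2 − r)·x_r(v) ≤ 6ω, written as a sum over the neighbors
of `v` (each neighbor at distance r contributes 2 − r). -/
theorem weighted_neighbor_sum_le (V : Finset ℂ) (ω : ℕ) (hω : IsCliqueNum V ω)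
    (v : ℂ) (hv : v ∈ V) :
    ∑ u ∈ V.filter (fun u => u ≠ v ∧ dist u v ≤ 1), (2 - dist u v)
      ≤ 6 * (ω : ℝ) := by
  classical
  by_contra hcon
  push_neg at hcon
  obtain ⟨N, hNdef⟩ : ∃ N, V.filter (fun u => u ≠ v ∧ dist u v ≤ 1) = N := ⟨_, rfl⟩
  rw [hNdef] at hcon
  have hε : (0:ℝ) < (∑ u ∈ N, (2 - dist u v)) - 6*ω := by linarith
  obtain ⟨M, hMgt⟩ := exists_nat_gt
    (max 1 (6*(N.card:ℝ)/((∑ u ∈ N, (2 - dist u v)) - 6*ω)))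
  have hM1 : (1:ℝ) < M := lt_of_le_of_lt (le_max_left _ _) hMgt
  have hM0 : 0 < M := by
    have : 1 < M := by exact_mod_cast hM1
    omega
  have hMd : 6*(N.card:ℝ)/((∑ u ∈ N, (2 - dist u v)) - 6*ω) < M :=
    lt_of_le_of_lt (le_max_right _ _) hMgt
  have hNsubV : N ⊆ V := by rw [← hNdef]; exact Finset.filter_subset _ _
  have hBnat : ∑ u ∈ N,
      ((Finset.range M).filter (fun j : ℕ => inT v (2*π*(j:ℝ)/(M:ℝ)) u)).card ≤ M * ω := by
    calc ∑ u ∈ N, ((Finset.range M).filter (fun j : ℕ => inT v (2*π*(j:ℝ)/(M:ℝ)) u)).card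
        = ∑ u ∈ N, ∑ j ∈ Finset.range M, (if inT v (2*π*(j:ℝ)/(M:ℝ)) u then 1 else 0) := by
          refine Finset.sum_congr rfl fun u _ => ?_
          rw [Finset.card_filter]
      _ ≤ ∑ u ∈ V, ∑ j ∈ Finset.range M, (if inT v (2*π*(j:ℝ)/(M:ℝ)) u then 1 else 0) :=
          Finset.sum_le_sum_of_subset hNsubV
      _ = ∑ j ∈ Finset.range M, ∑ u ∈ V, (if inT v (2*π*(j:ℝ)/(M:ℝ)) u then 1 else 0) :=
          Finset.sum_comm
      _ = ∑ j ∈ Finset.range M, (V.filter (fun u => inT v (2*π*(j:ℝ)/(M:ℝ)) u)).card := by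
          refine Finset.sum_congr rfl fun j _ => ?_
          rw [Finset.card_filter]
      _ ≤ ∑ _j ∈ Finset.range M, ω := Finset.sum_le_sum fun j _ => clique_bound V ω hω v _
      _ = M * ω := by rw [Finset.sum_const, Finset.card_range, smul_eq_mul]
  have hA : ∀ u ∈ N, (M:ℝ)*(2 - dist u v)/6 - 1 ≤
      ((((Finset.range M).filter (fun j : ℕ => inT v (2*π*(j:ℝ)/(M:ℝ)) u)).card : ℕ) : ℝ) := by
    intro u hu
    rw [← hNdef] at hu
    exact count_lower M hM0 u v (Finset.mem_filter.1 hu).2.2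
  have hsum : ∑ u ∈ N, ((M:ℝ)*(2 - dist u v)/6 - 1) ≤ (M:ℝ)*ω := by
    calc ∑ u ∈ N, ((M:ℝ)*(2 - dist u v)/6 - 1)
        ≤ ∑ u ∈ N,
          ((((Finset.range M).filter (fun j : ℕ => inT v (2*π*(j:ℝ)/(M:ℝ)) u)).card : ℕ) : ℝ) :=
          Finset.sum_le_sum hA
      _ = ((∑ u ∈ N,
          ((Finset.range M).filter (fun j : ℕ => inT v (2*π*(j:ℝ)/(M:ℝ)) u)).card : ℕ) : ℝ) := by
          push_cast; ring
      _ ≤ ((M * ω : ℕ) : ℝ) := by exact_mod_cast hBnat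
      _ = (M:ℝ)*ω := by push_cast; ring
  have hmulsum : ∑ u ∈ N, ((M:ℝ)*(2 - dist u v)/6)
      = (M:ℝ)*(∑ u ∈ N, (2 - dist u v))/6 := by
    rw [← Finset.sum_div, ← Finset.mul_sum]
  have hexp : ∑ u ∈ N, ((M:ℝ)*(2 - dist u v)/6 - 1)
      = (M:ℝ)*(∑ u ∈ N, (2 - dist u v))/6 - N.card := by
    rw [Finset.sum_sub_distrib, hmulsum, Finset.sum_const, nsmul_eq_mul, mul_one]
  rw [hexp] at hsum
  rw [div_lt_iff₀ hε] at hMd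
  linarith
end

section
/- Let G be a unit-disk graph embedded in the plane such that the y-coordinates of any two vertices differ by at most √3/2. Then G is perfect on each component in the following sense: χ(G) = ω(G). -/
/-- `A` is an antichain for the strict relation `r`. -/
def IsAC {α : Type*} (r : α → α → Prop) (A : Finset α) : Prop :=
  ∀ x ∈ A, ∀ y ∈ A, x ≠ y → ¬ r x y ∧ ¬ r y x

/-- A nonempty finite set has an `r`-maximal element, for `r` transitive and irreflexive. -/
theorem exists_r_maximal {α : Type*} {r : α → α → Prop}
    (htrans : ∀ {a b c}, r a b → r b c → r a c) (hirr : ∀ a, ¬ r a a) :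
    ∀ (S : Finset α), S.Nonempty → ∃ a ∈ S, ∀ b ∈ S, ¬ r a b := by
  classical
  intro S
  induction S using Finset.induction_on with
  | empty => rintro ⟨x, hx⟩; exact absurd hx (Finset.notMem_empty x)
  | @insert x T hxT ih =>
    intro _
    rcases T.eq_empty_or_nonempty with hT | hT
    · subst hT
      refine ⟨x, Finset.mem_insert_self x _, ?_⟩
      intro b hb
      rcases Finset.mem_insert.1 hb with rfl | hb
      · exact hirr b
      · exact absurd hb (Finset.notMem_empty b)
    · obtain ⟨a, haT, hamax⟩ := ih hT
      by_cases hax : r a x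
      · refine ⟨x, Finset.mem_insert_self x _, ?_⟩
        intro b hb
        rcases Finset.mem_insert.1 hb with rfl | hb
        · exact hirr b
        · intro hxb; exact hamax b hb (htrans hax hxb)
      · refine ⟨a, Finset.mem_insert_of_mem haT, ?_⟩
        intro b hb
        rcases Finset.mem_insert.1 hb with rfl | hb
        · exact hax
        · exact hamax b hb

/-- Dilworth's theorem: a finite set can be partitioned into chains, with the number of
chains equal to the cardinality of some antichain. -/
theorem dilworth {α : Type*} {r : α → α → Prop}
    (htrans : ∀ {a b c}, r a b → r b c → r a c) (hirr : ∀ a, ¬ r a a) (S : Finset α) :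
    ∃ (A : Finset α) (f : α → ℕ), A ⊆ S ∧ IsAC r A ∧ (∀ x ∈ S, f x < A.card) ∧
      (∀ x ∈ S, ∀ y ∈ S, f x = f y → x ≠ y → r x y ∨ r y x) := by
  classical
  induction S using Finset.strongInduction with
  | _ S ih =>
  rcases S.eq_empty_or_nonempty with rfl | hSne
  · exact ⟨∅, fun _ => 0, Finset.Subset.refl _, by intro x hx; simp at hx,
      by intro x hx; simp at hx, by intro x hx; simp at hx⟩
  obtain ⟨a, haS, hamax⟩ := exists_r_maximal (r := r) htrans hirr S hSne
  have haNe : Nonempty α := ⟨a⟩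
  set S' : Finset α := S.erase a with hS'def
  have hS'sub : S' ⊆ S := Finset.erase_subset a S
  have haS' : a ∉ S' := Finset.notMem_erase a S
  obtain ⟨A', f', hA'sub, hA'ac, hf'lt, hf'chain⟩ := ih S' (Finset.erase_ssubset haS)
  set k := A'.card with hkdef
  -- every antichain in S' has cardinality at most k
  have hbound : ∀ B ⊆ S', IsAC r B → B.card ≤ k := by
    intro B hBsub hBac
    have hinj : Set.InjOn f' ↑B := by
      intro x hx y hy hxy
      by_contra hne
      rcases hf'chain x (hBsub hx) y (hBsub hy) hxy hne with h | h
      · exact (hBac x hx y hy hne).1 h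
      · exact (hBac x hx y hy hne).2 h
    calc B.card = (B.image f').card := (Finset.card_image_of_injOn hinj).symm
      _ ≤ (Finset.range k).card := by
          apply Finset.card_le_card
          intro i hi
          obtain ⟨x, hx, rfl⟩ := Finset.mem_image.1 hi
          exact Finset.mem_range.2 (hf'lt x (hBsub hx))
      _ = k := Finset.card_range k
  -- every antichain in S' of cardinality k meets every fiber
  have hhit : ∀ B ⊆ S', IsAC r B → B.card = k → ∀ i < k, ∃ y ∈ B, f' y = i := by
    intro B hBsub hBac hBcard i hik
    have hinj : Set.InjOn f' ↑B := by
      intro x hx y hy hxy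
      by_contra hne
      rcases hf'chain x (hBsub hx) y (hBsub hy) hxy hne with h | h
      · exact (hBac x hx y hy hne).1 h
      · exact (hBac x hx y hy hne).2 h
    have hsub : B.image f' ⊆ Finset.range k := by
      intro j hj
      obtain ⟨x, hx, rfl⟩ := Finset.mem_image.1 hj
      exact Finset.mem_range.2 (hf'lt x (hBsub hx))
    have heq : B.image f' = Finset.range k := by
      apply Finset.eq_of_subset_of_card_le hsub
      rw [Finset.card_range, Finset.card_image_of_injOn hinj, hBcard]
    have : i ∈ B.image f' := heq ▸ Finset.mem_range.2 hik
    obtain ⟨y, hy, hfy⟩ := Finset.mem_image.1 this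
    exact ⟨y, hy, hfy⟩
  -- the elements of fiber i that belong to some maximum antichain
  set T : ℕ → Finset α := fun i =>
    S'.filter (fun x => f' x = i ∧ ∃ B, B ⊆ S' ∧ IsAC r B ∧ B.card = k ∧ x ∈ B) with hTdef
  have hTne : ∀ i < k, (T i).Nonempty := by
    intro i hik
    obtain ⟨y, hyA, hfy⟩ := hhit A' hA'sub hA'ac rfl i hik
    exact ⟨y, Finset.mem_filter.2 ⟨hA'sub hyA, hfy, A', hA'sub, hA'ac, rfl, hyA⟩⟩
  have hTmax' : ∀ i, ∃ x, i < k → (x ∈ T i ∧ ∀ b ∈ T i, ¬ r x b) := by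
    intro i
    by_cases hik : i < k
    · obtain ⟨x, hx1, hx2⟩ := exists_r_maximal (r := r) htrans hirr (T i) (hTne i hik)
      exact ⟨x, fun _ => ⟨hx1, hx2⟩⟩
    · exact ⟨Classical.arbitrary α, fun h => absurd h hik⟩
  set g : ℕ → α := fun i => Classical.choose (hTmax' i) with hgdef
  have hg : ∀ i, i < k → g i ∈ T i ∧ ∀ b ∈ T i, ¬ r (g i) b :=
    fun i hik => Classical.choose_spec (hTmax' i) hik
  have hgS' : ∀ i, i < k → g i ∈ S' := fun i hik => (Finset.mem_filter.1 (hg i hik).1).1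
  have hgfib : ∀ i, i < k → f' (g i) = i :=
    fun i hik => (Finset.mem_filter.1 (hg i hik).1).2.1
  -- every element of T i other than g i lies below g i
  have hdown : ∀ i, i < k → ∀ b ∈ T i, b ≠ g i → r b (g i) := by
    intro i hik b hb hne
    have hbS' : b ∈ S' := (Finset.mem_filter.1 hb).1
    have hbfib : f' b = i := (Finset.mem_filter.1 hb).2.1
    rcases hf'chain b hbS' (g i) (hgS' i hik) (by rw [hbfib, hgfib i hik]) hne with h | h
    · exact h
    · exact absurd h ((hg i hik).2 b hb)
  -- the g i form an antichain
  have hAC : ∀ i, i < k → ∀ j, j < k → i ≠ j → ¬ r (g i) (g j) := by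
    intro i hik j hjk hij hr
    obtain ⟨B, hBsub, hBac, hBcard, hgjB⟩ := (Finset.mem_filter.1 (hg j hjk).1).2.2
    obtain ⟨y, hyB, hyfib⟩ := hhit B hBsub hBac hBcard i hik
    have hyT : y ∈ T i := Finset.mem_filter.2 ⟨hBsub hyB, hyfib, B, hBsub, hBac, hBcard, hyB⟩
    have hyne : y ≠ g j := by
      intro h; rw [h, hgfib j hjk] at hyfib; exact hij hyfib.symm
    by_cases hygi : y = g i
    · rw [hygi] at hyB hyne
      exact (hBac _ hyB _ hgjB hyne).1 hr
    · exact (hBac y hyB (g j) hgjB hyne).1 (htrans (hdown i hik y hyT hygi) hr)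
  have hgne : ∀ i, i < k → ∀ j, j < k → i ≠ j → g i ≠ g j := by
    intro i hik j hjk hij h
    apply hij
    rw [← hgfib i hik, ← hgfib j hjk, h]
  by_cases hcase : ∃ i, i < k ∧ r (g i) a
  · -- Case 2: some g i is below a; remove the chain below g i together with a.
    obtain ⟨i, hik, hria⟩ := hcase
    set D : Finset α := S'.filter (fun x => f' x = i ∧ (x = g i ∨ r x (g i))) with hDdef
    set K : Finset α := insert a D with hKdef
    have haK : a ∈ K := Finset.mem_insert_self a D
    set S₂ : Finset α := S \ K with hS₂def
    have hS₂sub : S₂ ⊆ S := Finset.sdiff_subset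
    have hS₂ssub : S₂ ⊂ S := by
      refine Finset.ssubset_iff_of_subset hS₂sub |>.2 ⟨a, haS, ?_⟩
      simp [hS₂def, haK]
    have hS₂S' : S₂ ⊆ S' := by
      intro x hx
      have hxS : x ∈ S := hS₂sub hx
      have hxK : x ∉ K := (Finset.mem_sdiff.1 hx).2
      have hxa : x ≠ a := by rintro rfl; exact hxK haK
      exact Finset.mem_erase.2 ⟨hxa, hxS⟩
    obtain ⟨A₂, f₂, hA₂sub, hA₂ac, hf₂lt, hf₂chain⟩ := ih S₂ hS₂ssub
    set m := A₂.card with hmdef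
    have hmk : m < k := by
      have hle : m ≤ k := hbound A₂ (hA₂sub.trans hS₂S') hA₂ac
      rcases lt_or_eq_of_le hle with h | h
      · exact h
      · exfalso
        obtain ⟨y, hyA₂, hyfib⟩ := hhit A₂ (hA₂sub.trans hS₂S') hA₂ac h i hik
        have hyT : y ∈ T i := Finset.mem_filter.2
          ⟨hS₂S' (hA₂sub hyA₂), hyfib, A₂, hA₂sub.trans hS₂S', hA₂ac, h, hyA₂⟩
        have hyD : y ∈ D := by
          by_cases hygi : y = g i
          · exact Finset.mem_filter.2 ⟨hS₂S' (hA₂sub hyA₂), hyfib, Or.inl hygi⟩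
          · exact Finset.mem_filter.2
              ⟨hS₂S' (hA₂sub hyA₂), hyfib, Or.inr (hdown i hik y hyT hygi)⟩
        exact (Finset.mem_sdiff.1 (hA₂sub hyA₂)).2 (Finset.mem_insert_of_mem hyD)
    refine ⟨A', fun x => if x ∈ K then m else f₂ x, hA'sub.trans hS'sub, hA'ac, ?_, ?_⟩
    · intro x hxS
      by_cases hxK : x ∈ K
      · simpa [hxK] using hmk
      · have hxS₂ : x ∈ S₂ := Finset.mem_sdiff.2 ⟨hxS, hxK⟩
        simpa [hxK] using lt_trans (hf₂lt x hxS₂) hmk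
    · intro x hxS y hyS hfxy hne
      by_cases hxK : x ∈ K <;> by_cases hyK : y ∈ K
      · -- both in K : K is a chain
        have hchainK : ∀ z ∈ D, r z a := by
          intro z hz
          rcases (Finset.mem_filter.1 hz).2.2 with h | h
          · rw [h]; exact hria
          · exact htrans h hria
        rcases Finset.mem_insert.1 hxK with rfl | hxD
        · rcases Finset.mem_insert.1 hyK with rfl | hyD
          · exact absurd rfl hne
          · exact Or.inr (hchainK y hyD)
        · rcases Finset.mem_insert.1 hyK with rfl | hyD
          · exact Or.inl (hchainK x hxD)
          · have hx' := Finset.mem_filter.1 hxD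
            have hy' := Finset.mem_filter.1 hyD
            exact hf'chain x hx'.1 y hy'.1 (by rw [hx'.2.1, hy'.2.1]) hne
      · exfalso
        have : y ∈ S₂ := Finset.mem_sdiff.2 ⟨hyS, hyK⟩
        have h1 : f₂ y < m := hf₂lt y this
        simp only [if_pos hxK, if_neg hyK] at hfxy
        omega
      · exfalso
        have : x ∈ S₂ := Finset.mem_sdiff.2 ⟨hxS, hxK⟩
        have h1 : f₂ x < m := hf₂lt x this
        simp only [if_neg hxK, if_pos hyK] at hfxy
        omega
      · have hx₂ : x ∈ S₂ := Finset.mem_sdiff.2 ⟨hxS, hxK⟩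
        have hy₂ : y ∈ S₂ := Finset.mem_sdiff.2 ⟨hyS, hyK⟩
        simp only [if_neg hxK, if_neg hyK] at hfxy
        exact hf₂chain x hx₂ y hy₂ hfxy hne
  · -- Case 1: no g i is below a; `a` together with the g i forms a bigger antichain.
    push_neg at hcase
    set Ag : Finset α := (Finset.range k).image g with hAgdef
    have hginjOn : Set.InjOn g ↑(Finset.range k) := by
      intro i hi j hj hij
      by_contra hne
      exact hgne i (Finset.mem_range.1 hi) j (Finset.mem_range.1 hj) hne hij
    have hAgcard : Ag.card = k := by
      rw [hAgdef, Finset.card_image_of_injOn hginjOn, Finset.card_range]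
    have haAg : a ∉ Ag := by
      intro h
      obtain ⟨i, hi, hgi⟩ := Finset.mem_image.1 h
      exact haS' (hgi ▸ hgS' i (Finset.mem_range.1 hi))
    refine ⟨insert a Ag, fun x => if x = a then k else f' x, ?_, ?_, ?_, ?_⟩
    · intro x hx
      rcases Finset.mem_insert.1 hx with rfl | hx
      · exact haS
      · obtain ⟨i, hi, rfl⟩ := Finset.mem_image.1 hx
        exact hS'sub (hgS' i (Finset.mem_range.1 hi))
    · intro x hx y hy hne
      rcases Finset.mem_insert.1 hx with rfl | hxAg
      · rcases Finset.mem_insert.1 hy with rfl | hyAg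
        · exact absurd rfl hne
        · obtain ⟨j, hj, rfl⟩ := Finset.mem_image.1 hyAg
          have hjk := Finset.mem_range.1 hj
          exact ⟨hamax (g j) (hS'sub (hgS' j hjk)), hcase j hjk⟩
      · obtain ⟨i, hi, rfl⟩ := Finset.mem_image.1 hxAg
        have hik := Finset.mem_range.1 hi
        rcases Finset.mem_insert.1 hy with rfl | hyAg
        · exact ⟨hcase i hik, hamax (g i) (hS'sub (hgS' i hik))⟩
        · obtain ⟨j, hj, rfl⟩ := Finset.mem_image.1 hyAg
          have hjk := Finset.mem_range.1 hj
          have hij : i ≠ j := by rintro rfl; exact hne rfl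
          exact ⟨hAC i hik j hjk hij, hAC j hjk i hik (Ne.symm hij)⟩
    · intro x hxS
      rw [Finset.card_insert_of_notMem haAg, hAgcard]
      by_cases hxa : x = a
      · simp [hxa]
      · have : x ∈ S' := Finset.mem_erase.2 ⟨hxa, hxS⟩
        simpa [hxa] using Nat.lt_succ_of_lt (hf'lt x this)
    · intro x hxS y hyS hfxy hne
      by_cases hxa : x = a <;> by_cases hya : y = a
      · exact absurd (hxa.trans hya.symm) hne
      · exfalso
        have hy' : y ∈ S' := Finset.mem_erase.2 ⟨hya, hyS⟩
        simp only [if_pos hxa, if_neg hya] at hfxy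
        exact absurd hfxy.symm (Nat.ne_of_lt (hf'lt y hy'))
      · exfalso
        have hx' : x ∈ S' := Finset.mem_erase.2 ⟨hxa, hxS⟩
        simp only [if_neg hxa, if_pos hya] at hfxy
        exact absurd hfxy (Nat.ne_of_lt (hf'lt x hx'))
      · have hx' : x ∈ S' := Finset.mem_erase.2 ⟨hxa, hxS⟩
        have hy' : y ∈ S' := Finset.mem_erase.2 ⟨hya, hyS⟩
        simp only [if_neg hxa, if_neg hya] at hfxy
        exact hf'chain x hx' y hy' hfxy hne

/-- The unit-disk graph on a finite point set `V ⊆ ℂ`. -/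
def UDG (V : Finset ℂ) : SimpleGraph {z : ℂ // z ∈ V} where
  Adj u v := u ≠ v ∧ dist (u : ℂ) (v : ℂ) ≤ 1
  symm := by constructor; intro u v ⟨h1, h2⟩; exact ⟨h1.symm, by rwa [dist_comm]⟩
  loopless := by constructor; intro u ⟨h, _⟩; exact h rfl

/-- If all points of a unit-disk graph lie in a horizontal strip of height
√3/2, then its chromatic number equals its clique number. -/
theorem strip_udg_chromatic_eq_clique (V : Finset ℂ)
    (hstrip : ∀ p ∈ V, ∀ q ∈ V, |p.im - q.im| ≤ Real.sqrt 3 / 2) :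
    (UDG V).chromaticNumber = ((UDG V).cliqueNum : ℕ∞) := by
  classical
  have hsqrt3 : Real.sqrt 3 ≤ 2 := by
    rw [show (2 : ℝ) = Real.sqrt 4 by rw [show (4:ℝ) = 2^2 by norm_num, Real.sqrt_sq]; norm_num]
    exact Real.sqrt_le_sqrt (by norm_num)
  have hsq3 : Real.sqrt 3 ^ 2 = 3 := Real.sq_sqrt (by norm_num)
  -- the key geometric gap lemma
  have hgap : ∀ p ∈ V, ∀ q ∈ V, ¬ dist p q ≤ 1 → 1/2 < |p.re - q.re| := by
    intro p hp q hq hd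
    push_neg at hd
    have him : |p.im - q.im| ≤ Real.sqrt 3 / 2 := hstrip p hp q hq
    have hd2 : 1 < dist p q ^ 2 := by nlinarith [dist_nonneg (x := p) (y := q)]
    have habs : dist p q ^ 2 = (p.re - q.re)^2 + (p.im - q.im)^2 := by
      rw [Complex.dist_eq, Complex.sq_norm, Complex.normSq_apply]
      simp [Complex.sub_re, Complex.sub_im]
      ring
    have him2 : (p.im - q.im)^2 ≤ 3/4 := by
      have := abs_nonneg (p.im - q.im)
      nlinarith [sq_abs (p.im - q.im)]
    have hre2 : 1/4 < (p.re - q.re)^2 := by nlinarith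
    nlinarith [sq_abs (p.re - q.re), abs_nonneg (p.re - q.re)]
  -- the strict partial order
  set r : {z : ℂ // z ∈ V} → {z : ℂ // z ∈ V} → Prop :=
    fun u v => (u : ℂ).re < (v : ℂ).re ∧ ¬ (UDG V).Adj u v with hrdef
  have hrgap : ∀ u v, r u v → 1/2 < (v : ℂ).re - (u : ℂ).re := by
    intro u v ⟨hlt, hnadj⟩
    have hne : u ≠ v := by
      intro h; rw [h] at hlt; exact lt_irrefl _ hlt
    have hd : ¬ dist (u : ℂ) (v : ℂ) ≤ 1 := fun h => hnadj ⟨hne, h⟩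
    have h := hgap (u : ℂ) u.2 (v : ℂ) v.2 hd
    calc (1:ℝ)/2 < |(u:ℂ).re - (v:ℂ).re| := h
      _ = (v:ℂ).re - (u:ℂ).re := by rw [abs_sub_comm, abs_of_pos (by linarith)]
  have htrans : ∀ {u v w}, r u v → r v w → r u w := by
    intro u v w huv hvw
    have h1 := hrgap u v huv
    have h2 := hrgap v w hvw
    refine ⟨lt_trans huv.1 hvw.1, ?_⟩
    rintro ⟨hne, hd⟩
    have : |((u : ℂ) - (w : ℂ)).re| ≤ dist (u : ℂ) (w : ℂ) := by
      rw [Complex.dist_eq]; exact Complex.abs_re_le_norm _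
    rw [Complex.sub_re] at this
    have : (w : ℂ).re - (u : ℂ).re ≤ 1 := by
      have h3 := abs_le.1 (this.trans hd)
      linarith [h3.1]
    linarith
  have hirr : ∀ u, ¬ r u u := fun u h => lt_irrefl _ h.1
  -- apply Dilworth to the whole vertex set
  obtain ⟨A, f, -, hAac, hflt, hfchain⟩ :=
    dilworth (r := r) htrans hirr (Finset.univ : Finset {z : ℂ // z ∈ V})
  -- antichains are cliques
  have hAclique : (UDG V).IsClique ↑A := by
    intro u hu v hv hne
    have h := hAac u hu v hv hne
    by_contra hnadj
    have hne' : (u : ℂ) ≠ (v : ℂ) := Subtype.coe_injective.ne hne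
    rcases lt_trichotomy (u : ℂ).re (v : ℂ).re with hlt | heq | hlt
    · exact h.1 ⟨hlt, hnadj⟩
    · -- equal real parts: forced adjacency
      apply hnadj
      refine ⟨hne, ?_⟩
      have him : |(u:ℂ).im - (v:ℂ).im| ≤ Real.sqrt 3 / 2 := hstrip _ u.2 _ v.2
      rw [Complex.dist_eq]
      have habs : ‖(u:ℂ) - (v:ℂ)‖ ^ 2
          = ((u:ℂ).re - (v:ℂ).re)^2 + ((u:ℂ).im - (v:ℂ).im)^2 := by
        rw [Complex.sq_norm, Complex.normSq_apply]
        simp [Complex.sub_re, Complex.sub_im]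
        ring
      have him2 : ((u:ℂ).im - (v:ℂ).im)^2 ≤ 3/4 := by
        have := abs_nonneg ((u:ℂ).im - (v:ℂ).im)
        nlinarith [sq_abs ((u:ℂ).im - (v:ℂ).im)]
      nlinarith [norm_nonneg ((u:ℂ) - (v:ℂ))]
    · exact h.2 ⟨hlt, fun hadj => hnadj hadj.symm⟩
  have hAcard : A.card ≤ (UDG V).cliqueNum := hAclique.card_le_cliqueNum
  -- the chain partition is a proper coloring
  have hcolor : (UDG V).Colorable (UDG V).cliqueNum := by
    refine ⟨SimpleGraph.Coloring.mk
      (fun x => ⟨f x, lt_of_lt_of_le (hflt x (Finset.mem_univ x)) hAcard⟩) ?_⟩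
    intro u v hadj heq
    have hfuv : f u = f v := congrArg Fin.val heq
    have hne : u ≠ v := hadj.1
    rcases hfchain u (Finset.mem_univ u) v (Finset.mem_univ v) hfuv hne with h | h
    · exact h.2 hadj
    · exact h.2 hadj.symm
  apply le_antisymm
  · exact SimpleGraph.chromaticNumber_le_iff_colorable.2 hcolor
  · obtain ⟨s, hs⟩ := (UDG V).exists_isNClique_cliqueNum
    have := hs.isClique.card_le_chromaticNumber
    rwa [hs.card_eq] at this
end

section
/- Among any 6 points in the closed unit disk of ℝ² centered at the origin, there exist two distinct points at Euclidean distance at most 1 from each other. -/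
lemma mulconj_re (x y : ℂ) : (x * (starRingEnd ℂ) y).re = ‖x‖ * ‖y‖ * Real.cos (x.arg - y.arg) := by
  rcases eq_or_ne x 0 with rfl | hx
  · simp
  rcases eq_or_ne y 0 with rfl | hy
  · simp
  have hax : ‖x‖ ≠ 0 := by simpa using hx
  have hay : ‖y‖ ≠ 0 := by simpa using hy
  rw [Real.cos_sub, Complex.cos_arg hx, Complex.sin_arg, Complex.cos_arg hy, Complex.sin_arg]
  simp [Complex.mul_re]
  field_simp

lemma key (x y : ℂ) (hx1 : ‖x‖ ≤ 1) (hy1 : ‖y‖ ≤ 1)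
    (hc : (1:ℝ)/2 ≤ Real.cos (x.arg - y.arg)) : dist x y ≤ 1 := by
  have h2 : ‖x - y‖^2 = ‖x‖^2 + ‖y‖^2 - 2 * (x * (starRingEnd ℂ) y).re := by
    rw [← Complex.normSq_eq_norm_sq, Complex.normSq_sub,
      Complex.normSq_eq_norm_sq, Complex.normSq_eq_norm_sq]
  have hx0 : 0 ≤ ‖x‖ := norm_nonneg x
  have hy0 : 0 ≤ ‖y‖ := norm_nonneg y
  have h1 : dist x y ^ 2 ≤ 1 := by
    rw [dist_eq_norm, h2, mulconj_re]
    have h3 : ‖x‖^2 ≤ ‖x‖ := by nlinarith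
    have h4 : ‖y‖^2 ≤ ‖y‖ := by nlinarith
    have h5 : 0 ≤ ‖x‖ * ‖y‖ * (2 * Real.cos (x.arg - y.arg) - 1) :=
      mul_nonneg (mul_nonneg hx0 hy0) (by linarith)
    have h6 : 0 ≤ (1 - ‖x‖) * (1 - ‖y‖) := mul_nonneg (by linarith) (by linarith)
    nlinarith
  nlinarith [dist_nonneg (x := x) (y := y)]

lemma cos_half {t : ℝ} (h : |t| ≤ Real.pi / 3) : (1:ℝ)/2 ≤ Real.cos t := by
  rw [← Real.cos_abs]
  have h2 : Real.cos (Real.pi / 3) ≤ Real.cos |t| :=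
    Real.cos_le_cos_of_nonneg_of_le_pi (abs_nonneg t)
      (by linarith [Real.pi_pos]) h
  rwa [Real.cos_pi_div_three] at h2

theorem six_points_in_unit_disk (S : Finset ℂ) (hcard : S.card = 6)
    (hS : ∀ p ∈ S, ‖p‖ ≤ 1) :
    ∃ x ∈ S, ∃ y ∈ S, x ≠ y ∧ dist x y ≤ 1 := by
  have hπ : (0:ℝ) < Real.pi := Real.pi_pos
  have hne : S.Nonempty := by rw [← Finset.card_pos, hcard]; norm_num
  obtain ⟨p₀, hp₀S, hp₀min⟩ := S.exists_min_image Complex.arg hne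
  by_cases hA : ∃ p ∈ S, Real.pi * 5 / 3 ≤ p.arg - p₀.arg
  · obtain ⟨p, hpS, hp⟩ := hA
    refine ⟨p, hpS, p₀, hp₀S, ?_, ?_⟩
    · intro h; rw [h] at hp; simp at hp; linarith
    · apply key _ _ (hS p hpS) (hS p₀ hp₀S)
      have h1 : p.arg ≤ Real.pi := Complex.arg_le_pi p
      have h2 : -Real.pi < p₀.arg := Complex.neg_pi_lt_arg p₀
      rw [← Real.cos_sub_two_pi]
      exact cos_half (abs_le.2 ⟨by linarith, by linarith⟩)
  · push_neg at hA
    have hmaps : ∀ p ∈ S, (⌊(p.arg - p₀.arg) * 3 / Real.pi⌋₊ : ℕ) ∈ Finset.range 5 := by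
      intro p hp
      have h0 : 0 ≤ (p.arg - p₀.arg) * 3 / Real.pi :=
        div_nonneg (by have := hp₀min p hp; linarith) hπ.le
      rw [Finset.mem_range, Nat.floor_lt h0]
      have := hA p hp
      push_cast
      rw [div_lt_iff₀ hπ]
      linarith
    obtain ⟨x, hxS, y, hyS, hxy, hfeq⟩ :=
      Finset.exists_ne_map_eq_of_card_lt_of_maps_to
        (by rw [hcard, Finset.card_range]; norm_num) hmaps
    refine ⟨x, hxS, y, hyS, hxy, ?_⟩
    apply key _ _ (hS x hxS) (hS y hyS)
    apply cos_half
    set a := (x.arg - p₀.arg) * 3 / Real.pi with ha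
    set b := (y.arg - p₀.arg) * 3 / Real.pi with hb
    have ha0 : 0 ≤ a := by
      apply div_nonneg _ hπ.le
      have := hp₀min x hxS; linarith
    have hb0 : 0 ≤ b := by
      apply div_nonneg _ hπ.le
      have := hp₀min y hyS; linarith
    have h1 : a - b < 1 := by
      have := Nat.lt_floor_add_one a
      have := Nat.floor_le hb0
      rw [hfeq] at *
      push_cast at *
      linarith
    have h2 : b - a < 1 := by
      have := Nat.lt_floor_add_one b
      have := Nat.floor_le ha0
      rw [← hfeq] at *
      push_cast at *
      linarith
    have hab : a - b = (x.arg - y.arg) * 3 / Real.pi := by rw [ha, hb]; ring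
    have hba : b - a = (y.arg - x.arg) * 3 / Real.pi := by rw [ha, hb]; ring
    have h1' : x.arg - y.arg < Real.pi / 3 := by
      rw [hab, div_lt_iff₀ hπ] at h1; linarith
    have h2' : y.arg - x.arg < Real.pi / 3 := by
      rw [hba, div_lt_iff₀ hπ] at h2; linarith
    rw [abs_le]
    constructor <;> linarith
end
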